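/- Let C₁ be a channel from a finite set X₁ to a finite set Y₁ of traces and C₂ a channel from a finite set X₂ to a finite set Y₂ of traces. Assume that for all y₁, y₁' ∈ Y₁ and y₂, y₂' ∈ Y₂, if Int(y₁,y₂) ∩ Int(y₁',y₂') ≠ ∅ then y₁ = y₁' and y₂ = y₂'. Then for every prior π on X₁×X₂ and every scheduler S on Y₁, Y₂, the mutual information of the scheduled composition equals that of the parallel composition: I(π, Comp_S(C₁,C₂)) = I(π, C₁×C₂). -/
import Mathlib


open scoped Classical BigOperators

noncomputable section

/-- A (row-stochastic) channel matrix whose outputs range over a finite set `Ys`. -/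
def FIsChannel {X B : Type*} (Ys : Finset B) (C : X → B → ℝ) : Prop :=
  (∀ x y, 0 ≤ C x y) ∧ ∀ x, ∑ y ∈ Ys, C x y = 1

/-- A prior (probability distribution). -/
def IsPrior {X : Type*} [Fintype X] (π : X → ℝ) : Prop :=
  (∀ x, 0 ≤ π x) ∧ ∑ x, π x = 1

/-- Cascade composition of channels (matrix product), outputs of the first ranging
over the finite set `Ys`. -/
def Fcascade {X B Z : Type*} (Ys : Finset B) (C : X → B → ℝ) (D : B → Z → ℝ) :
    X → Z → ℝ :=
  fun x z => ∑ y ∈ Ys, C x y * D y z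

/-- Mutual information (base-2), with `0`-probability terms taken to be `0`. -/
def FMI {X B : Type*} [Fintype X] (π : X → ℝ) (Ys : Finset B) (C : X → B → ℝ) : ℝ :=
  ∑ x, ∑ y ∈ Ys, if π x * C x y = 0 then 0
    else π x * C x y * Real.logb 2 (C x y / ∑ x', π x' * C x' y)

/-- Prior vulnerability. -/
def Vprior {X : Type*} [Fintype X] [Nonempty X] (π : X → ℝ) : ℝ :=
  Finset.univ.sup' Finset.univ_nonempty π

/-- Posterior vulnerability. -/
def FVpost {X B : Type*} [Fintype X] [Nonempty X]
    (π : X → ℝ) (Ys : Finset B) (C : X → B → ℝ) : ℝ :=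
  ∑ y ∈ Ys, Finset.univ.sup' Finset.univ_nonempty (fun x => π x * C x y)

/-- Min-entropy leakage. -/
def FMEL {X B : Type*} [Fintype X] [Nonempty X]
    (π : X → ℝ) (Ys : Finset B) (C : X → B → ℝ) : ℝ :=
  Real.logb 2 (FVpost π Ys C) - Real.logb 2 (Vprior π)

/-- Min-capacity: supremum of min-entropy leakage over all priors. -/
def FMinCap {X B : Type*} [Fintype X] [Nonempty X] (Ys : Finset B) (C : X → B → ℝ) : ℝ :=
  sSup {l : ℝ | ∃ π : X → ℝ, IsPrior π ∧ l = FMEL π Ys C}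

/-- All interleavings (shuffles) of two traces. -/
def interleavings {A : Type*} : List A → List A → List (List A)
  | [], ys => [ys]
  | x :: xs, [] => [x :: xs]
  | x :: xs, y :: ys =>
      ((interleavings xs (y :: ys)).map (x :: ·)) ++
        ((interleavings (x :: xs) ys).map (y :: ·))
termination_by l₁ l₂ => l₁.length + l₂.length

/-- The interleaving `Int(y₁, y₂)` of two traces, as a finite set. -/
def IntF {A : Type*} [DecidableEq A] (y₁ y₂ : List A) : Finset (List A) :=
  (interleavings y₁ y₂).toFinset

/-- The interleaving `Int(Y₁, Y₂)` of two finite sets of traces. -/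
def IntSet {A : Type*} [DecidableEq A] (Y₁ Y₂ : Finset (List A)) : Finset (List A) :=
  Y₁.biUnion fun y₁ => Y₂.biUnion fun y₂ => IntF y₁ y₂

/-- A scheduler on `Y₁`, `Y₂`: for each pair of traces it yields a probability
distribution supported on their interleavings. -/
def IsScheduler {A : Type*} [DecidableEq A] (Y₁ Y₂ : Finset (List A))
    (S : List A → List A → List A → ℝ) : Prop :=
  ∀ y₁ ∈ Y₁, ∀ y₂ ∈ Y₂,
    (∀ y, 0 ≤ S y₁ y₂ y) ∧ (∀ y, y ∉ IntF y₁ y₂ → S y₁ y₂ y = 0) ∧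
      ∑ y ∈ IntF y₁ y₂, S y₁ y₂ y = 1

/-- The scheduled composition of two channels with respect to a scheduler. -/
def Comp {A X₁ X₂ : Type*} (Y₁ Y₂ : Finset (List A))
    (C₁ : X₁ → List A → ℝ) (C₂ : X₂ → List A → ℝ)
    (S : List A → List A → List A → ℝ) : X₁ × X₂ → List A → ℝ :=
  fun x y => ∑ y₁ ∈ Y₁, ∑ y₂ ∈ Y₂, C₁ x.1 y₁ * C₂ x.2 y₂ * S y₁ y₂ y

/-- The (disjoint) parallel composition of two channels. -/
def Par {A X₁ X₂ : Type*} (C₁ : X₁ → List A → ℝ) (C₂ : X₂ → List A → ℝ) :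
    X₁ × X₂ → List A × List A → ℝ :=
  fun x y => C₁ x.1 y.1 * C₂ x.2 y.2

/-- if distinct pairs of component traces have disjoint
interleavings, then scheduled composition has the same mutual information as
parallel composition, for every scheduler. -/
theorem scheduled_eq_parallel_MI_of_disjoint_interleavings
    {A X₁ X₂ : Type*} [DecidableEq A] [Fintype X₁] [Fintype X₂]
    (Y₁ Y₂ : Finset (List A))
    (C₁ : X₁ → List A → ℝ) (C₂ : X₂ → List A → ℝ)
    (hC₁ : FIsChannel Y₁ C₁) (hC₂ : FIsChannel Y₂ C₂)
    (hdisj : ∀ y₁ ∈ Y₁, ∀ y₁' ∈ Y₁, ∀ y₂ ∈ Y₂, ∀ y₂' ∈ Y₂,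
      (IntF y₁ y₂ ∩ IntF y₁' y₂').Nonempty → y₁ = y₁' ∧ y₂ = y₂')
    (π : X₁ × X₂ → ℝ) (hπ : IsPrior π)
    (S : List A → List A → List A → ℝ) (hS : IsScheduler Y₁ Y₂ S) :
    FMI π (IntSet Y₁ Y₂) (Comp Y₁ Y₂ C₁ C₂ S) = FMI π (Y₁ ×ˢ Y₂) (Par C₁ C₂) := by
  -- IntSet as a biUnion over the product
  have hIntSet : IntSet Y₁ Y₂ = (Y₁ ×ˢ Y₂).biUnion (fun p => IntF p.1 p.2) := by
    ext y
    simp only [IntSet, Finset.mem_biUnion, Finset.mem_product]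
    constructor
    · rintro ⟨y₁, h₁, y₂, h₂, hy⟩; exact ⟨(y₁, y₂), ⟨h₁, h₂⟩, hy⟩
    · rintro ⟨p, ⟨h₁, h₂⟩, hy⟩; exact ⟨p.1, h₁, p.2, h₂, hy⟩
  -- pairwise disjointness
  have hpd : ∀ p ∈ Y₁ ×ˢ Y₂, ∀ q ∈ Y₁ ×ˢ Y₂, p ≠ q →
      Disjoint (IntF p.1 p.2) (IntF q.1 q.2) := by
    intro p hp q hq hpq
    rw [Finset.mem_product] at hp hq
    rw [Finset.disjoint_iff_inter_eq_empty, ← Finset.not_nonempty_iff_eq_empty]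
    intro hne
    obtain ⟨h1, h2⟩ := hdisj p.1 hp.1 q.1 hq.1 p.2 hp.2 q.2 hq.2 hne
    exact hpq (Prod.ext h1 h2)
  -- Comp collapses on IntF p.1 p.2
  have hcomp : ∀ p ∈ Y₁ ×ˢ Y₂, ∀ y ∈ IntF p.1 p.2, ∀ x,
      Comp Y₁ Y₂ C₁ C₂ S x y = Par C₁ C₂ x p * S p.1 p.2 y := by
    intro p hp y hy x
    rw [Finset.mem_product] at hp
    unfold Comp Par
    rw [Finset.sum_eq_single_of_mem p.1 hp.1]
    · rw [Finset.sum_eq_single_of_mem p.2 hp.2]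
      intro b hb hbne
      have hS0 : S p.1 b y = 0 := by
        by_cases hyb : y ∈ IntF p.1 b
        · exact absurd ((hdisj p.1 hp.1 p.1 hp.1 p.2 hp.2 b hb
            ⟨y, Finset.mem_inter.2 ⟨hy, hyb⟩⟩).2) (Ne.symm hbne)
        · exact (hS p.1 hp.1 b hb).2.1 y hyb
      rw [hS0, mul_zero]
    · intro a ha hane
      apply Finset.sum_eq_zero
      intro b hb
      have hS0 : S a b y = 0 := by
        by_cases hyb : y ∈ IntF a b
        · exact absurd ((hdisj p.1 hp.1 a ha p.2 hp.2 b hb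
            ⟨y, Finset.mem_inter.2 ⟨hy, hyb⟩⟩).1) (Ne.symm hane)
        · exact (hS a ha b hb).2.1 y hyb
      rw [hS0, mul_zero]
  unfold FMI
  rw [hIntSet]
  apply Finset.sum_congr rfl
  intro x _
  rw [Finset.sum_biUnion hpd]
  apply Finset.sum_congr rfl
  intro p hp
  -- inner sum over IntF p.1 p.2 equals the parallel term
  have hsum : ∑ y ∈ IntF p.1 p.2, S p.1 p.2 y = 1 := by
    rw [Finset.mem_product] at hp
    exact (hS p.1 hp.1 p.2 hp.2).2.2
  set P := Par C₁ C₂ x p with hP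
  set Q := ∑ x', π x' * Par C₁ C₂ x' p with hQ
  have key : ∀ y ∈ IntF p.1 p.2,
      (if π x * Comp Y₁ Y₂ C₁ C₂ S x y = 0 then 0
        else π x * Comp Y₁ Y₂ C₁ C₂ S x y *
          Real.logb 2 (Comp Y₁ Y₂ C₁ C₂ S x y / ∑ x', π x' * Comp Y₁ Y₂ C₁ C₂ S x' y))
      = S p.1 p.2 y * (if π x * P = 0 then 0 else π x * P * Real.logb 2 (P / Q)) := by
    intro y hy
    have hc : ∀ x', Comp Y₁ Y₂ C₁ C₂ S x' y = Par C₁ C₂ x' p * S p.1 p.2 y :=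
      fun x' => hcomp p hp y hy x'
    by_cases hs : S p.1 p.2 y = 0
    · simp [hc, hs]
    · have hden : (∑ x', π x' * Comp Y₁ Y₂ C₁ C₂ S x' y) = Q * S p.1 p.2 y := by
        rw [hQ, Finset.sum_mul]
        exact Finset.sum_congr rfl fun x' _ => by rw [hc x', mul_assoc]
      rw [hc x, hden, ← hP]
      by_cases hz : π x * P = 0
      · simp [hz, ← mul_assoc, hs]
      · have hz' : π x * (P * S p.1 p.2 y) ≠ 0 := by
          rw [← mul_assoc]; exact mul_ne_zero hz hs
        rw [if_neg hz', if_neg hz, mul_div_mul_right _ _ hs]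
        ring
  rw [Finset.sum_congr rfl key, ← Finset.sum_mul, hsum, one_mul]
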